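/- arXiv:2001.02138 — 2 statements merged into one kernel-verified Lean document; each statement's English description precedes it below -/
import Mathlib

section
/- For any sequence (e_1, ..., e_n) of non-negative integers, the determinant [e_1, ..., e_n] := det(x_j^{p^{e_i}})_{1≤i,j≤n} in F_p[x_1,...,x_n] is divisible by the determinant L_n := [0,1,...,n-1]. -/
/-!
Every nonzero linear form `ℓ = ∑ vⱼ xⱼ` divides `[e₁,…,eₙ]`: replacing a column `j₀` with
`v_{j₀} ≠ 0` by `∑ vⱼ • (column j)` multiplies the determinant by the unit `v_{j₀}` and produces
the column `(ℓ ^ p ^ eₖ)ₖ`, because `f ↦ f ^ p ^ t` is additive and fixes `F_p`. Linear forms are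
prime and two of them are associated only when proportional, so the product `P` of one linear form
per point of `ℙ^{n-1}(F_p)` divides every `[e]`. Finally `L_n ≠ 0` (its diagonal monomial has
coefficient `1`) and `deg L_n = 1 + p + ⋯ + p^{n-1} = #ℙ^{n-1}(F_p) = deg P`, so `L_n` is a nonzero
scalar multiple of `P`.
-/

open MvPolynomial Matrix Finset

/-- `[e₁,…,eₙ]`: the determinant of the matrix with `(k,j)`-entry `x_j^{p^{e_k}}`. -/
noncomputable def bracket (p n : ℕ) (e : Fin n → ℕ) : MvPolynomial (Fin n) (ZMod p) :=
  (Matrix.of fun k j : Fin n => (X j : MvPolynomial (Fin n) (ZMod p)) ^ p ^ (e k)).det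

/-- `L_n = [0,1,…,n-1]`. -/
noncomputable def Ln (p n : ℕ) : MvPolynomial (Fin n) (ZMod p) :=
  bracket p n (fun k => (k : ℕ))

/-- `L_{n,s} = [0,1,…,ŝ,…,n]` (entry `s` omitted from `0,…,n`). -/
noncomputable def Lns (p n s : ℕ) : MvPolynomial (Fin n) (ZMod p) :=
  bracket p n (fun k => if (k : ℕ) < s then (k : ℕ) else (k : ℕ) + 1)

/-- The `i`-th primitive Steenrod–Milnor operation, as the `F_p`-derivation
with `D_i(x_j) = x_j^{p^i}`. -/
noncomputable def Dop (p n i : ℕ) :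
    Derivation (ZMod p) (MvPolynomial (Fin n) (ZMod p)) (MvPolynomial (Fin n) (ZMod p)) :=
  MvPolynomial.mkDerivation (ZMod p) (fun j : Fin n => (X j) ^ p ^ i)

/-- The action of a matrix `g` on `P_n` by linear substitution of the variables. -/
noncomputable def act (p n : ℕ) (g : Matrix (Fin n) (Fin n) (ZMod p)) :
    MvPolynomial (Fin n) (ZMod p) →ₐ[ZMod p] MvPolynomial (Fin n) (ZMod p) :=
  MvPolynomial.aeval (fun j : Fin n => ∑ k : Fin n, g j k • (X k : MvPolynomial (Fin n) (ZMod p)))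

open scoped LinearAlgebra.Projectivization

namespace MvPolynomial

section LinearForms

variable {σ R : Type*} [CommRing R]

theorem isHomogeneous_sumSMulX (c : σ →₀ R) : (sumSMulX c).IsHomogeneous 1 := by
  rw [sumSMulX, Finsupp.linearCombination_apply, Finsupp.sum]
  exact IsHomogeneous.sum _ _ _ fun i _ => by
    rw [smul_eq_C_mul]; exact isHomogeneous_C_mul_X _ i

theorem sumSMulX_injective : Function.Injective (sumSMulX : (σ →₀ R) → MvPolynomial σ R) :=
  fun c d h => Finsupp.ext fun i => by rw [← coeff_sumSMulX c i, h, coeff_sumSMulX]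

variable {K : Type*} [Field K]

theorem prime_sumSMulX {c : σ →₀ K} (hc : c ≠ 0) : Prime (sumSMulX c) := by
  obtain ⟨i, hi⟩ := Finsupp.support_nonempty_iff.2 hc
  refine (irreducible_sumSMulX c ⟨i, hi⟩ fun r hr => ?_).prime
  exact isUnit_iff_ne_zero.2 (ne_zero_of_dvd_ne_zero (Finsupp.mem_support_iff.1 hi) (hr i))

theorem exists_eq_mul_C_of_dvd_of_totalDegree_le {f g : MvPolynomial σ K} (hfg : f ∣ g)
    (hg : g ≠ 0) (hdeg : g.totalDegree ≤ f.totalDegree) : ∃ c : K, c ≠ 0 ∧ g = f * C c := by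
  obtain ⟨q, rfl⟩ := hfg
  obtain ⟨hf, hq⟩ := mul_ne_zero_iff.1 hg
  rw [totalDegree_mul_of_isDomain hf hq] at hdeg
  have hqC := totalDegree_eq_zero_iff_eq_C.1 (by omega : q.totalDegree = 0)
  refine ⟨q.coeff 0, fun hc => hq ?_, by rw [← hqC]⟩
  rw [hqC, hc, C_0]

end LinearForms

section Alternants

variable {m R : Type*} [Fintype m] [CommRing R]

theorem prod_X_pow_eq_monomial_of_fintype (f : m → ℕ) :
    ∏ j, (X j : MvPolynomial m R) ^ f j = monomial (Finsupp.equivFunOnFinite.symm f) 1 := by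
  rw [monomial_eq, C_1, one_mul, Finsupp.prod_fintype _ _ fun _ => pow_zero _]
  rfl

variable [DecidableEq m]

theorem isHomogeneous_det_X_pow (f : m → ℕ) :
    (Matrix.of fun k j => (X j : MvPolynomial m R) ^ f k).det.IsHomogeneous (∑ k, f k) := by
  rw [det_apply]
  refine IsHomogeneous.sum _ _ _ fun τ _ => ?_
  rw [Units.smul_def, zsmul_eq_mul, ← map_intCast (C : R →+* MvPolynomial m R),
    ← Equiv.sum_comp τ f]
  exact (IsHomogeneous.prod _ _ _ fun j _ => isHomogeneous_X_pow j _).C_mul _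

theorem coeff_det_X_pow {f : m → ℕ} (hf : Function.Injective f) :
    (Matrix.of fun k j => (X j : MvPolynomial m R) ^ f k).det.coeff
      (Finsupp.equivFunOnFinite.symm f) = 1 := by
  rw [det_apply, coeff_sum, Finset.sum_eq_single 1]
  · simp [prod_X_pow_eq_monomial_of_fintype]
  · intro τ _ hτ
    rw [Units.smul_def, zsmul_eq_mul, ← map_intCast (C : R →+* MvPolynomial m R), coeff_C_mul]
    simp only [of_apply]
    rw [prod_X_pow_eq_monomial_of_fintype fun i => f (τ i), coeff_monomial, if_neg, mul_zero]
    intro h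
    exact hτ (Equiv.ext fun j => hf (congrFun (Finsupp.equivFunOnFinite.symm.injective h) j))
  · simp

theorem det_X_pow_ne_zero [Nontrivial R] {f : m → ℕ} (hf : Function.Injective f) :
    (Matrix.of fun k j => (X j : MvPolynomial m R) ^ f k).det ≠ 0 := fun h => by
  simpa [h] using coeff_det_X_pow (R := R) hf

end Alternants

theorem expand_pow_zmod {σ : Type*} (p : ℕ) [Fact p.Prime] (t : ℕ)
    (f : MvPolynomial σ (ZMod p)) : expand (p ^ t) f = f ^ p ^ t := by
  induction t with
  | zero => simp
  | succ t ih => rw [pow_succ', expand_mul, ih, map_pow, expand_zmod, ← pow_mul]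

end MvPolynomial

theorem Matrix.dvd_det_of_forall_dvd_col {m R : Type*} [Fintype m] [DecidableEq m] [CommRing R]
    (M : Matrix m m R) (j : m) {d : R} (h : ∀ k, d ∣ M k j) : d ∣ M.det := by
  rw [det_apply']
  exact Finset.dvd_sum fun τ _ =>
    ((h (τ j)).trans (Finset.dvd_prod_of_mem (fun i => M (τ i) i) (Finset.mem_univ j))).mul_left _

namespace Projectivization

variable {σ K : Type*} [Field K]

noncomputable def linearForm (x : ℙ K (σ →₀ K)) : MvPolynomial σ K := sumSMulX x.rep

theorem prime_linearForm (x : ℙ K (σ →₀ K)) : Prime x.linearForm :=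
  prime_sumSMulX x.rep_nonzero

theorem eq_of_linearForm_dvd {x y : ℙ K (σ →₀ K)} (h : x.linearForm ∣ y.linearForm) :
    x = y := by
  have hdeg (z : ℙ K (σ →₀ K)) : z.linearForm.totalDegree = 1 :=
    (isHomogeneous_sumSMulX _).totalDegree (prime_linearForm z).ne_zero
  obtain ⟨c, -, hc⟩ := exists_eq_mul_C_of_dvd_of_totalDegree_le h (prime_linearForm y).ne_zero
    (by rw [hdeg, hdeg])
  have hyx : y.rep = c • x.rep := by
    apply sumSMulX_injective
    rw [map_smul, ← linearForm, ← linearForm, hc, smul_eq_C_mul, mul_comm]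
  rw [← x.mk_rep, ← y.mk_rep, eq_comm, mk_eq_mk_iff' K _ _ y.rep_nonzero x.rep_nonzero]
  exact ⟨c, hyx.symm⟩

variable [Fintype (ℙ K (σ →₀ K))]

theorem prod_linearForm_dvd {f : MvPolynomial σ K} (h : ∀ x : ℙ K (σ →₀ K), x.linearForm ∣ f) :
    ∏ x : ℙ K (σ →₀ K), x.linearForm ∣ f := by
  classical
  refine Multiset.prod_primes_dvd f (by simpa using fun x => prime_linearForm x)
    (by simpa using h) fun a => ?_
  rw [Multiset.countP_map, ← Finset.filter_val, Finset.card_val]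
  refine Finset.card_le_one.2 fun x hx y hy => eq_of_linearForm_dvd ?_
  exact ((Finset.mem_filter.1 hx).2.symm.trans (Finset.mem_filter.1 hy).2).dvd

theorem totalDegree_prod_linearForm :
    (∏ x : ℙ K (σ →₀ K), x.linearForm).totalDegree = Fintype.card (ℙ K (σ →₀ K)) := by
  have h := IsHomogeneous.prod Finset.univ (fun x : ℙ K (σ →₀ K) => x.linearForm) (fun _ => 1)
    fun _ _ => isHomogeneous_sumSMulX _
  rw [Finset.sum_const, smul_eq_mul, mul_one] at h
  exact h.totalDegree (Finset.prod_ne_zero_iff.2 fun x _ => (prime_linearForm x).ne_zero)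

end Projectivization

variable {p n : ℕ} [Fact p.Prime]

theorem sumSMulX_dvd_bracket {v : Fin n →₀ ZMod p} (hv : v ≠ 0) (e : Fin n → ℕ) :
    sumSMulX v ∣ bracket p n e := by
  obtain ⟨j₀, hj₀⟩ := Finsupp.ne_iff.1 hv
  set M := Matrix.of fun k j : Fin n => (X j : MvPolynomial (Fin n) (ZMod p)) ^ p ^ e k
  set c : Fin n → MvPolynomial (Fin n) (ZMod p) := fun j => C (v j)
  have hcol (k : Fin n) : ∑ j, c j • M k j = sumSMulX v ^ p ^ e k := by
    rw [← expand_pow_zmod, sumSMulX, Finsupp.linearCombination_apply,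
      Finsupp.sum_fintype _ _ (by simp), map_sum]
    simp [M, c, smul_eq_C_mul, expand_X]
  have hdvd := (M.updateCol j₀ fun k => ∑ j, c j • M k j).dvd_det_of_forall_dvd_col j₀ fun k => by
    rw [updateCol_self, hcol]
    exact dvd_pow_self _ (pow_ne_zero _ (Fact.out : p.Prime).ne_zero)
  rwa [det_updateCol_sum, smul_eq_mul, (isUnit_iff_ne_zero.2 hj₀).map C |>.dvd_mul_left] at hdvd

theorem card_projectivization_zmod [Fintype (ℙ (ZMod p) (Fin n →₀ ZMod p))] :
    Fintype.card (ℙ (ZMod p) (Fin n →₀ ZMod p)) = ∑ k : Fin n, p ^ (k : ℕ) := by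
  rw [Fintype.card_eq_nat_card, Projectivization.card_of_finrank (ZMod p) _ (n := n) (by simp),
    Nat.card_zmod, Fin.sum_univ_eq_sum_range]

theorem associated_prod_linearForm_Ln [Fintype (ℙ (ZMod p) (Fin n →₀ ZMod p))] :
    Associated (∏ x : ℙ (ZMod p) (Fin n →₀ ZMod p), x.linearForm) (Ln p n) := by
  have hinj : Function.Injective fun k : Fin n => p ^ (k : ℕ) :=
    (Nat.pow_right_injective (Fact.out : p.Prime).two_le).comp Fin.val_injective
  obtain ⟨c, hc, h⟩ := exists_eq_mul_C_of_dvd_of_totalDegree_le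
    (Projectivization.prod_linearForm_dvd fun x => sumSMulX_dvd_bracket x.rep_nonzero _)
    (det_X_pow_ne_zero hinj) (by
      rw [Projectivization.totalDegree_prod_linearForm, card_projectivization_zmod]
      exact (isHomogeneous_det_X_pow _).totalDegree_le)
  exact ⟨Units.map C.toMonoidHom (Units.mk0 c hc), h.symm⟩

theorem stmt0_general (p n : ℕ) [Fact p.Prime] (e : Fin n → ℕ) :
    Ln p n ∣ bracket p n e := by
  have := Fintype.ofFinite (ℙ (ZMod p) (Fin n →₀ ZMod p))
  exact associated_prod_linearForm_Ln.symm.dvd.trans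
    (Projectivization.prod_linearForm_dvd fun x => sumSMulX_dvd_bracket x.rep_nonzero e)

theorem stmt0 (p n : ℕ) [Fact p.Prime] (hn : 1 ≤ n) (e : Fin n → ℕ) :
    Ln p n ∣ bracket p n e :=
  stmt0_general p n e
end

section
/- The Dickson invariant Q_{n,0} equals L_n^{p-1}, where L_n = [0,1,...,n-1] and Q_{n,0} = [1,2,...,n]/L_n. -/
/-!
In characteristic `p` the Frobenius map is a ring endomorphism, so it commutes with the
determinant: `L_n ^ p = [1,…,n] = L_{n,0}`. Since `L_n ≠ 0` (the permutation expansion contains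
the monomial `∏ x_k ^ p ^ k` exactly once), `L_n` can be cancelled from `L_{n,0} = L_n * Q_{n,0}`.
-/

open MvPolynomial Matrix Finset

lemma prod_X_pow_eq_monomial_equivFunOnFinite {σ R : Type*} [Fintype σ] [CommSemiring R]
    (f : σ → ℕ) :
    ∏ i, (X i : MvPolynomial σ R) ^ f i = monomial (Finsupp.equivFunOnFinite.symm f) 1 := by
  rw [monomial_eq, C_1, one_mul, Finsupp.prod_fintype _ _ fun _ => pow_zero _]
  rfl

lemma bracket_succ (p n : ℕ) [Fact p.Prime] (e : Fin n → ℕ) :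
    bracket p n (fun k => e k + 1) = bracket p n e ^ p := by
  rw [bracket, bracket, ← frobenius_def, RingHom.map_det]
  congr 1
  ext k j
  simp [frobenius_def, ← pow_mul, pow_succ]

lemma coeff_bracket_of_injective {p n : ℕ} (hp : 1 < p) {e : Fin n → ℕ}
    (he : Function.Injective e) :
    coeff (Finsupp.equivFunOnFinite.symm fun k => p ^ e k) (bracket p n e) = 1 := by
  rw [bracket, det_apply, coeff_sum, Finset.sum_eq_single 1]
  · simp [prod_X_pow_eq_monomial_equivFunOnFinite]
  · intro σ _ hσ
    have hne : (Finsupp.equivFunOnFinite.symm fun i => p ^ e (σ i))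
        ≠ Finsupp.equivFunOnFinite.symm fun k => p ^ e k := by
      refine fun h => hσ (Equiv.ext fun i => he (Nat.pow_right_injective hp ?_))
      exact congrFun (Finsupp.equivFunOnFinite.symm.injective h) i
    simp [prod_X_pow_eq_monomial_equivFunOnFinite, coeff_monomial, hne]
  · simp

lemma bracket_ne_zero_of_injective {p n : ℕ} [Fact p.Prime] {e : Fin n → ℕ}
    (he : Function.Injective e) : bracket p n e ≠ 0 := fun h => by
  simpa [h] using coeff_bracket_of_injective (Fact.out : p.Prime).one_lt he

lemma Ln_ne_zero (p n : ℕ) [Fact p.Prime] : Ln p n ≠ 0 :=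
  bracket_ne_zero_of_injective Fin.val_injective

lemma Lns_zero (p n : ℕ) [Fact p.Prime] : Lns p n 0 = Ln p n ^ p := by
  simpa [Lns, Ln] using bracket_succ p n fun k => (k : ℕ)

theorem stmt2_general (p n : ℕ) [Fact p.Prime]
    (Q0 : MvPolynomial (Fin n) (ZMod p)) (hQ0 : Lns p n 0 = Ln p n * Q0) :
    Q0 = (Ln p n) ^ (p - 1) := by
  refine mul_left_cancel₀ (Ln_ne_zero p n) ?_
  rw [← hQ0, Lns_zero, ← pow_succ', Nat.sub_add_cancel (Fact.out : p.Prime).one_le]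

theorem stmt2 (p n : ℕ) [Fact p.Prime] (hn : 1 ≤ n)
    (Q0 : MvPolynomial (Fin n) (ZMod p)) (hQ0 : Lns p n 0 = Ln p n * Q0) :
    Q0 = (Ln p n) ^ (p - 1) :=
  stmt2_general p n Q0 hQ0
end
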